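/- arXiv:1603.08332 — 2 statements merged into one kernel-verified Lean document; each statement's English description precedes it below -/
import Mathlib

section
/- For positive integers k, l, p and nonnegative integers m, n: z_k z_p^m ⋆̄ z_l z_p^n = Σ_{i=1}^{m} z_k (z_p^i z_l − z_p^{i-1} z_{p+l}) (z_p^{m-i} ⋆̄ z_p^n) + Σ_{i=1}^{n} z_l (z_p^i z_k − z_p^{i-1} z_{p+k}) (z_p^{n-i} ⋆̄ z_p^m) + (z_k z_l + z_l z_k − z_{k+l}) (z_p^m ⋆̄ z_p^n). -/
/-!
One application of the defining recursion at the heads `z_k`, `z_l` leaves products in which one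
side is `z_k z_p^m` or `z_l z_p^n` and the other is a pure power of `z_p` (after using symmetry
of `⋆̄`). For `z_p^m ⋆̄ z_l w`, unfolding the recursion along `z_p^m` by induction on `m` peels off
one `z_p` at a time; the `i`-th step contributes `(z_p^i z_l − z_p^{i-1} z_{p+l}) (z_p^{m-i} ⋆̄ w)`,
and what remains is `z_l (z_p^m ⋆̄ w)`.
-/

open MonoidAlgebra Finset

abbrev H : Type := MonoidAlgebra ℚ (FreeMonoid ℕ+)

noncomputable def word (w : List ℕ+) : H := MonoidAlgebra.single (FreeMonoid.ofList w) 1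

noncomputable def z (k : ℕ+) : H := word [k]

noncomputable def st : List ℕ+ → List ℕ+ → H
  | [], w => word w
  | k :: w1, [] => word (k :: w1)
  | k :: w1, l :: w2 =>
      z k * st w1 (l :: w2) + z l * st (k :: w1) w2 + z (k + l) * st w1 w2
termination_by a b => a.length + b.length
decreasing_by all_goals (simp; try omega)
noncomputable def stbar : List ℕ+ → List ℕ+ → H
  | [], w => word w
  | k :: w1, [] => word (k :: w1)
  | k :: w1, l :: w2 =>
      z k * stbar w1 (l :: w2) + z l * stbar (k :: w1) w2 - z (k + l) * stbar w1 w2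
termination_by a b => a.length + b.length
decreasing_by all_goals (simp; try omega)

lemma sum_Icc_one_eq_sum_range {M : Type*} [AddCommMonoid M] (f : ℕ → M) (m : ℕ) :
    ∑ i ∈ Icc 1 m, f i = ∑ i ∈ range m, f (i + 1) := by
  rw [range_eq_Ico, sum_Ico_add', ← Ico_add_one_right_eq_Icc]

lemma word_nil : word [] = 1 := by
  simp [word, MonoidAlgebra.one_def]

lemma word_cons (a : ℕ+) (w : List ℕ+) : word (a :: w) = z a * word w := by
  simp [word, z, MonoidAlgebra.single_mul_single]

lemma z_mul_word_replicate (p : ℕ+) (i : ℕ) :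
    z p * word (List.replicate i p) = word (List.replicate (i + 1) p) := by
  rw [List.replicate_succ, word_cons]

lemma stbar_nil_left (w : List ℕ+) : stbar [] w = word w := by
  cases w <;> simp [stbar]

lemma stbar_nil_right (w : List ℕ+) : stbar w [] = word w := by
  cases w <;> simp [stbar]

lemma stbar_cons_cons (k l : ℕ+) (w₁ w₂ : List ℕ+) :
    stbar (k :: w₁) (l :: w₂) =
      z k * stbar w₁ (l :: w₂) + z l * stbar (k :: w₁) w₂ - z (k + l) * stbar w₁ w₂ := by
  rw [stbar]

theorem stbar_comm : ∀ w₁ w₂ : List ℕ+, stbar w₁ w₂ = stbar w₂ w₁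
  | [], w => by rw [stbar_nil_left, stbar_nil_right]
  | k :: w₁, [] => by rw [stbar_nil_left, stbar_nil_right]
  | k :: w₁, l :: w₂ => by
      rw [stbar_cons_cons, stbar_cons_cons, stbar_comm w₁ (l :: w₂), stbar_comm (k :: w₁) w₂,
        stbar_comm w₁ w₂, add_comm k l]
      abel
termination_by w₁ w₂ => w₁.length + w₂.length

theorem stbar_replicate_cons (p l : ℕ+) (w : List ℕ+) (m : ℕ) :
    stbar (List.replicate m p) (l :: w) =
      ∑ i ∈ range m,
        (word (List.replicate (i + 1) p) * z l - word (List.replicate i p) * z (p + l))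
          * stbar (List.replicate (m - (i + 1)) p) w
      + z l * stbar (List.replicate m p) w := by
  induction m with
  | zero => simp [stbar_nil_left, word_cons]
  | succ m ih =>
    rw [List.replicate_succ, stbar_cons_cons, ← List.replicate_succ, ih, sum_range_succ',
      mul_add, mul_sum]
    simp only [← mul_assoc, mul_sub, z_mul_word_replicate, Nat.add_sub_add_right]
    simp only [zero_add, List.replicate_one, List.replicate_zero, word_cons, word_nil, mul_one,
      one_mul, tsub_zero]
    noncomm_ring

theorem stbar_one_one (k l p : ℕ+) (m n : ℕ) :
    stbar (k :: List.replicate m p) (l :: List.replicate n p) =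
      (∑ i ∈ Finset.Icc 1 m,
        z k * (word (List.replicate i p) * z l - word (List.replicate (i - 1) p) * z (p + l))
          * stbar (List.replicate (m - i) p) (List.replicate n p))
      + (∑ i ∈ Finset.Icc 1 n,
        z l * (word (List.replicate i p) * z k - word (List.replicate (i - 1) p) * z (p + k))
          * stbar (List.replicate (n - i) p) (List.replicate m p))
      + (z k * z l + z l * z k - z (k + l)) * stbar (List.replicate m p) (List.replicate n p) := by
  rw [stbar_cons_cons, stbar_comm (k :: _), stbar_replicate_cons, stbar_replicate_cons,
    sum_Icc_one_eq_sum_range, sum_Icc_one_eq_sum_range, stbar_comm (List.replicate n p)]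
  simp only [Nat.add_sub_cancel, mul_add, mul_sum, mul_assoc]
  noncomm_ring
end

section
/- For positive integers k, l, p with k, l ≥ 2 and p ≥ 2, and nonnegative integers m, n: ζ(k, {p}^m) ζ(l, {p}^n) = Σ_{1≤i≤m, 0≤j≤min(m-i,n), k∈A_j^{m+n-i-2j}} binom(m+n-i-2j, n-j) [ζ(k, {p}^i, l, k) + ζ(k, {p}^{i-1}, p+l, k)] + Σ_{1≤i≤n, 0≤j≤min(m,n-i), k∈A_j^{m+n-i-2j}} binom(m+n-i-2j, m-j) [ζ(l, {p}^i, k, k) + ζ(l, {p}^{i-1}, p+k, k)] + Σ_{0≤j≤min(m,n), k∈A_j^{m+n-2j}} binom(m+n-2j, m-j) [ζ(k, l, k) + ζ(l, k, k) + ζ(k+l, k)]. -/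
/-- The multiple zeta value ζ(k₁,…,kₙ) = ∑_{m₁ > m₂ > ⋯ > mₙ > 0} ∏ᵢ mᵢ^{-kᵢ}. -/
noncomputable def mzv (ks : List ℕ) : ℝ :=
  ∑' m : {f : Fin ks.length → ℕ // (∀ i j : Fin ks.length, i < j → f j < f i) ∧ ∀ i, 0 < f i},
    ∏ i : Fin ks.length, (1 : ℝ) / (m.1 i : ℝ) ^ ks.get i

/-- The multiple zeta-star value ζ*(k₁,…,kₙ) = ∑_{m₁ ≥ m₂ ≥ ⋯ ≥ mₙ ≥ 1} ∏ᵢ mᵢ^{-kᵢ}. -/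
noncomputable def mzvStar (ks : List ℕ) : ℝ :=
  ∑' m : {f : Fin ks.length → ℕ // (∀ i j : Fin ks.length, i < j → f j ≤ f i) ∧ ∀ i, 1 ≤ f i},
    ∏ i : Fin ks.length, (1 : ℝ) / (m.1 i : ℝ) ^ ks.get i

/-- The string consisting of copies of `p` and `2*p`, with `2*p` at the positions in `S`. -/
def strA {N : ℕ} (p : ℕ) (S : Finset (Fin N)) : List ℕ :=
  List.ofFn fun t => if t ∈ S then 2 * p else p

/-
Both sides are expanded through the harmonic (stuffle) product. For sums truncated to `m₁ < N`,
splitting the double sum over the two leading indices into `m > n`, `m < n` and `m = n` gives,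
by induction on the words, `ζ_N(u) ζ_N(v) = ∑_{w ∈ u ∗ v} ζ_N(w)`; in `ℝ≥0∞` this also holds for
`N = ∞`, and all the values are finite once every entry is at least `2`.

The identity is then the combinatorics of the stuffle `(k, {p}^m) ∗ (l, {p}^n)`. In the stuffle of
`{p}^a` and `{p}^b`, a word with `j` letters `2p` and `a + b - 2j` letters `p` occurs
`binom(a + b - 2j, b - j)` times, by Pascal's rule. Peeling off the leading letters `k`, `l` and the
run of `p`s standing before `l` (resp. `k`) produces the three groups of terms.
-/

open Finset

section Stuffle

variable {α M : Type*}

def stuffle [Add α] : List α → List α → List (List α)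
  | [], v => [v]
  | u, [] => [u]
  | a :: x, b :: y =>
      (stuffle x (b :: y)).map (a :: ·) ++ (stuffle (a :: x) y).map (b :: ·)
        ++ (stuffle x y).map ((a + b) :: ·)

variable [AddCommMonoid M]

def stuffleSum [Add α] (G : List α → M) (u v : List α) : M :=
  ((stuffle u v).map G).sum

section Add

variable [Add α] (G : List α → M)

@[simp]
lemma stuffleSum_nil_left (v : List α) : stuffleSum G [] v = G v := by
  simp [stuffleSum, stuffle]

@[simp]
lemma stuffleSum_nil_right (u : List α) : stuffleSum G u [] = G u := by
  cases u <;> simp [stuffleSum, stuffle]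

lemma stuffleSum_cons_cons (a b : α) (x y : List α) :
    stuffleSum G (a :: x) (b :: y) =
      stuffleSum (fun w => G (a :: w)) x (b :: y) + stuffleSum (fun w => G (b :: w)) (a :: x) y
        + stuffleSum (fun w => G ((a + b) :: w)) x y := by
  simp [stuffleSum, stuffle, Function.comp_def, add_assoc]

lemma stuffleSum_add (H : List α → M) (u v : List α) :
    stuffleSum (fun w => G w + H w) u v = stuffleSum G u v + stuffleSum H u v := by
  simp [stuffleSum, List.sum_map_add]

lemma stuffleSum_congr {G G' : List α → M} {u v : List α} (h : ∀ w ∈ stuffle u v, G w = G' w) :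
    stuffleSum G u v = stuffleSum G' u v :=
  congrArg List.sum (List.map_congr_left h)

lemma map_stuffleSum {N F : Type*} [AddCommMonoid N] [FunLike F M N] [AddMonoidHomClass F M N]
    (f : F) (u v : List α) : f (stuffleSum G u v) = stuffleSum (fun w => f (G w)) u v := by
  simp [stuffleSum, map_list_sum, Function.comp_def]

lemma forall_mem_stuffle {P : α → Prop} (hP : ∀ a b, P a → P b → P (a + b)) :
    ∀ {u v : List α}, (∀ c ∈ u, P c) → (∀ c ∈ v, P c) → ∀ w ∈ stuffle u v, ∀ c ∈ w, P c
  | [], v, _, hv, w, hw => by simp_all [stuffle]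
  | a :: x, [], hu, _, w, hw => by simp_all [stuffle]
  | a :: x, b :: y, hu, hv, w, hw => by
    simp only [List.forall_mem_cons] at hu hv
    simp only [stuffle, List.mem_append, List.mem_map] at hw
    rcases hw with (⟨w, hw, rfl⟩ | ⟨w, hw, rfl⟩) | ⟨w, hw, rfl⟩ <;>
      simp only [List.forall_mem_cons]
    · exact ⟨hu.1, forall_mem_stuffle hP hu.2 (List.forall_mem_cons.2 hv) w hw⟩
    · exact ⟨hv.1, forall_mem_stuffle hP (List.forall_mem_cons.2 hu) hv.2 w hw⟩
    · exact ⟨hP _ _ hu.1 hv.1, forall_mem_stuffle hP hu.2 hv.2 w hw⟩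

end Add

lemma stuffleSum_comm [AddCommMagma α] (G : List α → M) :
    ∀ u v : List α, stuffleSum G u v = stuffleSum G v u
  | [], v => by simp
  | a :: x, [] => by simp
  | a :: x, b :: y => by
    rw [stuffleSum_cons_cons, stuffleSum_cons_cons, stuffleSum_comm _ x,
      stuffleSum_comm _ (a :: x), stuffleSum_comm _ x, add_comm a b,
      add_comm (stuffleSum _ (b :: y) x)]

end Stuffle

open scoped ENNReal

noncomputable def invPowBelow (a : ℕ) (N : ℕ∞) (m : ℕ) : ℝ≥0∞ :=
  if 0 < m ∧ (m : ℕ∞) < N then (m : ℝ≥0∞)⁻¹ ^ a else 0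

/-- `ζ(ks)` with the summation restricted to `N > m₁`; it is `ζ(ks)` itself for `N = ⊤`. -/
noncomputable def mzvBelow : List ℕ → ℕ∞ → ℝ≥0∞
  | [], _ => 1
  | a :: x, N => ∑' m, invPowBelow a N m * mzvBelow x m

@[simp]
lemma mzvBelow_nil (N : ℕ∞) : mzvBelow [] N = 1 := rfl

lemma mzvBelow_cons (a : ℕ) (x : List ℕ) (N : ℕ∞) :
    mzvBelow (a :: x) N = ∑' m, invPowBelow a N m * mzvBelow x m := rfl

lemma invPowBelow_mul_invPowBelow (a b : ℕ) (N : ℕ∞) (m : ℕ) :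
    invPowBelow a N m * invPowBelow b N m = invPowBelow (a + b) N m := by
  unfold invPowBelow; split_ifs <;> simp [pow_add]

lemma invPowBelow_eq_zero_of_le {a : ℕ} {N : ℕ∞} {m : ℕ} (h : N ≤ m) : invPowBelow a N m = 0 :=
  if_neg fun h' => (h'.2.trans_le h).false

lemma ite_lt_invPowBelow {b : ℕ} {N : ℕ∞} {m : ℕ} (h : (m : ℕ∞) ≤ N) (n : ℕ) :
    (if n < m then invPowBelow b N n else 0) = invPowBelow b m n := by
  unfold invPowBelow
  by_cases hnm : n < m
  · have hnm' : (n : ℕ∞) < m := by exact_mod_cast hnm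
    simp [hnm, hnm', hnm'.trans_le h]
  · have : ¬ (n : ℕ∞) < m := by exact_mod_cast hnm
    simp [hnm, this]

lemma invPowBelow_mul_congr_ite_lt (a : ℕ) (N : ℕ∞) (m : ℕ) (F : (ℕ → ℕ → ℝ≥0∞) → ℝ≥0∞) :
    invPowBelow a N m * F (fun b n => if n < m then invPowBelow b N n else 0)
      = invPowBelow a N m * F (fun b => invPowBelow b m) := by
  rcases le_or_gt N m with h | h
  · simp [invPowBelow_eq_zero_of_le h]
  · simp_rw [ite_lt_invPowBelow h.le]

lemma tsum_mul_tsum_eq_trichotomy {ι : Type*} [LinearOrder ι] (f g : ι → ℝ≥0∞) :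
    (∑' m, f m) * ∑' n, g n =
      ∑' m, f m * ∑' n, (if n < m then g n else 0) + ∑' n, g n * ∑' m, (if m < n then f m else 0)
        + ∑' m, f m * g m := by
  have split (m n : ι) : f m * g n = (if n < m then f m * g n else 0)
      + (if m < n then g n * f m else 0) + (if m = n then f m * g n else 0) := by
    rcases lt_trichotomy m n with h | rfl | h
    · simp [h, h.not_gt, h.ne, mul_comm]
    · simp
    · simp [h, h.not_gt, h.ne']
  calc (∑' m, f m) * ∑' n, g n = ∑' m, ∑' n, f m * g n := by
        simp_rw [ENNReal.tsum_mul_left, ENNReal.tsum_mul_right]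
    _ = ∑' m, ∑' n, ((if n < m then f m * g n else 0)
          + (if m < n then g n * f m else 0) + (if m = n then f m * g n else 0)) :=
        tsum_congr fun m => tsum_congr fun n => split m n
    _ = _ := by
      simp only [ENNReal.tsum_add, ← ENNReal.tsum_mul_left, mul_ite, mul_zero]
      rw [ENNReal.tsum_comm (f := fun m n => if m < n then g n * f m else 0)]
      simp

lemma tsum_mul_stuffleSum {α ι : Type*} [Add α] (c : ι → ℝ≥0∞) (F : List α → ι → ℝ≥0∞)
    (u v : List α) :
    ∑' m, c m * stuffleSum (F · m) u v = stuffleSum (fun w => ∑' m, c m * F w m) u v := by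
  unfold stuffleSum
  induction stuffle u v with
  | nil => simp
  | cons w L ih => simp [mul_add, ENNReal.tsum_add, ih]

theorem mzvBelow_mul_mzvBelow :
    ∀ (u v : List ℕ) (N : ℕ∞), mzvBelow u N * mzvBelow v N = stuffleSum (mzvBelow · N) u v
  | [], v, N => by simp
  | a :: x, [], N => by simp
  | a :: x, b :: y, N => by
    have lower (m : ℕ) : invPowBelow a N m * mzvBelow x m
          * ∑' n, (if n < m then invPowBelow b N n * mzvBelow y n else 0)
        = invPowBelow a N m * stuffleSum (mzvBelow · m) x (b :: y) := by
      simp_rw [mul_right_comm _ (mzvBelow x m), ← ite_zero_mul]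
      rw [invPowBelow_mul_congr_ite_lt a N m (fun W => ∑' n, W b n * mzvBelow y n),
        ← mzvBelow_cons, mul_assoc, mul_comm (mzvBelow _ m), mzvBelow_mul_mzvBelow]
    have upper (n : ℕ) : invPowBelow b N n * mzvBelow y n
          * ∑' m, (if m < n then invPowBelow a N m * mzvBelow x m else 0)
        = invPowBelow b N n * stuffleSum (mzvBelow · n) (a :: x) y := by
      simp_rw [mul_right_comm _ (mzvBelow y n), ← ite_zero_mul]
      rw [invPowBelow_mul_congr_ite_lt b N n (fun W => ∑' m, W a m * mzvBelow x m),
        ← mzvBelow_cons, mul_assoc, mzvBelow_mul_mzvBelow]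
    have diagonal (m : ℕ) :
        invPowBelow a N m * mzvBelow x m * (invPowBelow b N m * mzvBelow y m)
          = invPowBelow (a + b) N m * stuffleSum (mzvBelow · m) x y := by
      rw [mul_mul_mul_comm, invPowBelow_mul_invPowBelow, mzvBelow_mul_mzvBelow]
    rw [mzvBelow_cons, mzvBelow_cons, tsum_mul_tsum_eq_trichotomy, tsum_congr lower,
      tsum_congr upper, tsum_congr diagonal, tsum_mul_stuffleSum, tsum_mul_stuffleSum,
      tsum_mul_stuffleSum, stuffleSum_cons_cons]
    rfl

lemma Fin.strictAnti_cons {α : Type*} [Preorder α] {n : ℕ} {a : α} {f : Fin n → α} :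
    StrictAnti (Fin.cons a f : Fin (n + 1) → α) ↔ (∀ i, f i < a) ∧ StrictAnti f :=
  Fin.liftFun_cons (· > ·)

lemma mzvBelow_eq_tsum (ks : List ℕ) (N : ℕ∞) :
    mzvBelow ks N = ∑' f : Fin ks.length → ℕ,
      if StrictAnti f then ∏ i, invPowBelow (ks.get i) N (f i) else 0 := by
  induction ks generalizing N with
  | nil => simp [tsum_fintype, Subsingleton.strictAnti]
  | cons a x ih =>
    have summand_cons (m : ℕ) (g : Fin x.length → ℕ) :
        invPowBelow a N m * (if StrictAnti g then ∏ i, invPowBelow (x.get i) m (g i) else 0)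
          = if StrictAnti (Fin.cons m g : Fin (x.length + 1) → ℕ) then
              ∏ i : Fin (x.length + 1),
                invPowBelow ((a :: x).get i) N (Fin.cons (α := fun _ => ℕ) m g i)
            else 0 := by
      rw [← invPowBelow_mul_congr_ite_lt a N m
        (fun W => if StrictAnti g then ∏ i, W (x.get i) (g i) else 0)]
      simp only [Fin.prod_univ_succ, Fin.strictAnti_cons, prod_ite_zero, Fin.cons_zero,
        Fin.cons_succ, mem_univ, true_implies]
      by_cases hg : StrictAnti g <;> by_cases hm : ∀ i, g i < m <;> simp [hg, hm]
    simp only [mzvBelow_cons, ih, ← ENNReal.tsum_mul_left, summand_cons]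
    rw [← ENNReal.tsum_prod]
    exact (Fin.consEquiv fun _ => ℕ).tsum_eq (fun f : Fin (x.length + 1) → ℕ =>
      if StrictAnti f then ∏ i, invPowBelow ((a :: x).get i) N (f i) else 0)

lemma mzvBelow_top (ks : List ℕ) :
    mzvBelow ks ⊤ = ∑' f : {f : Fin ks.length → ℕ //
        (∀ i j : Fin ks.length, i < j → f j < f i) ∧ ∀ i, 0 < f i},
      ∏ i, (f.1 i : ℝ≥0∞)⁻¹ ^ ks.get i := by
  refine (mzvBelow_eq_tsum ks ⊤).trans (Eq.trans (tsum_congr fun f => ?_) (_root_.tsum_subtype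
    {f : Fin ks.length → ℕ | (∀ i j, i < j → f j < f i) ∧ ∀ i, 0 < f i}
    fun f => ∏ i, (f i : ℝ≥0∞)⁻¹ ^ ks.get i).symm)
  by_cases hf : StrictAnti f
  · have hf' : ∀ i j : Fin ks.length, i < j → f j < f i := fun i j h => hf h
    simp [Set.indicator, invPowBelow, hf, and_iff_right hf', prod_ite_zero]
  · have hf' : ¬ ∀ i j : Fin ks.length, i < j → f j < f i := fun h => hf fun i j => h i j
    simp [Set.indicator, hf, hf']

lemma mzv_eq_toReal (ks : List ℕ) : mzv ks = (mzvBelow ks ⊤).toReal := by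
  rw [mzvBelow_top, ENNReal.tsum_toReal_eq, mzv]
  · simp [ENNReal.toReal_prod, one_div]
  · exact fun f => ENNReal.prod_ne_top fun i _ => by simp [(f.2.2 i).ne']

lemma invPowBelow_le_invPowBelow_two {a : ℕ} (ha : 2 ≤ a) (N : ℕ∞) (m : ℕ) :
    invPowBelow a N m ≤ invPowBelow 2 ⊤ m := by
  unfold invPowBelow
  split_ifs with h h'
  · exact pow_le_pow_right_of_le_one' (ENNReal.inv_le_one.2 (by exact_mod_cast h.1)) ha
  · exact absurd ⟨h.1, ENat.natCast_lt_top m⟩ h'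
  · exact bot_le
  · exact le_rfl

lemma mzvBelow_two_top_ne_top : mzvBelow [2] ⊤ ≠ ⊤ := by
  have h (m : ℕ) : invPowBelow 2 ⊤ m * mzvBelow [] m = ENNReal.ofReal (((m : ℝ) ^ 2)⁻¹) := by
    rcases Nat.eq_zero_or_pos m with rfl | hm
    · simp [invPowBelow]
    · simp [invPowBelow, hm, ENNReal.ofReal_inv_of_pos, ENNReal.ofReal_pow, ENNReal.inv_pow]
  rw [mzvBelow_cons, tsum_congr h, ← ENNReal.ofReal_tsum_of_nonneg (fun _ => by positivity)
    (Real.summable_nat_pow_inv.2 one_lt_two)]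
  exact ENNReal.ofReal_ne_top

lemma mzvBelow_le_pow {ks : List ℕ} (hks : ∀ c ∈ ks, 2 ≤ c) (N : ℕ∞) :
    mzvBelow ks N ≤ mzvBelow [2] ⊤ ^ ks.length := by
  induction ks generalizing N with
  | nil => simp
  | cons a x ih =>
    rw [List.forall_mem_cons] at hks
    calc mzvBelow (a :: x) N = ∑' m, invPowBelow a N m * mzvBelow x m := mzvBelow_cons a x N
      _ ≤ ∑' m, invPowBelow 2 ⊤ m * mzvBelow [] m * mzvBelow [2] ⊤ ^ x.length :=
        ENNReal.tsum_le_tsum fun m => by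
          simpa using mul_le_mul' (invPowBelow_le_invPowBelow_two hks.1 N m) (ih hks.2 m)
      _ = mzvBelow [2] ⊤ ^ (a :: x).length := by
        rw [ENNReal.tsum_mul_right, List.length_cons, pow_succ', mzvBelow_cons]

lemma mzvBelow_ne_top {ks : List ℕ} (hks : ∀ c ∈ ks, 2 ≤ c) (N : ℕ∞) : mzvBelow ks N ≠ ⊤ :=
  ne_top_of_le_ne_top (ENNReal.pow_ne_top mzvBelow_two_top_ne_top) (mzvBelow_le_pow hks N)

lemma toReal_stuffleSum {α : Type*} [Add α] {G : List α → ℝ≥0∞} {u v : List α}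
    (hG : ∀ w ∈ stuffle u v, G w ≠ ⊤) :
    (stuffleSum G u v).toReal = stuffleSum (fun w => (G w).toReal) u v := by
  have lift : stuffleSum G u v
      = ENNReal.ofNNRealHom (stuffleSum (fun w => (G w).toNNReal) u v) := by
    rw [map_stuffleSum]
    exact stuffleSum_congr fun w hw => (ENNReal.coe_toNNReal (hG w hw)).symm
  rw [lift]
  exact map_stuffleSum _ NNReal.toRealHom u v

theorem mzv_mul_mzv {u v : List ℕ} (hu : ∀ c ∈ u, 2 ≤ c) (hv : ∀ c ∈ v, 2 ≤ c) :
    mzv u * mzv v = stuffleSum mzv u v := by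
  have hmzv : mzv = fun w => (mzvBelow w ⊤).toReal := funext mzv_eq_toReal
  have hfin (w : List ℕ) (hw : w ∈ stuffle u v) : mzvBelow w ⊤ ≠ ⊤ :=
    mzvBelow_ne_top (forall_mem_stuffle (fun _ _ ha _ => le_add_right ha) hu hv w hw) ⊤
  rw [hmzv, ← ENNReal.toReal_mul, mzvBelow_mul_mzvBelow, toReal_stuffleSum hfin]

/-- The multiplicity of a word with `j` letters `2q` and `a + b - 2j` letters `q` in the stuffle
of `q^a` and `q^b`, extended by zero to all `j`. -/
def stuffleCoeff (a b j : ℕ) : ℕ :=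
  if j ≤ a ∧ j ≤ b then (a + b - 2 * j).choose (b - j) else 0

lemma stuffleCoeff_of_not_le {a b j : ℕ} (h : ¬(j ≤ a ∧ j ≤ b)) : stuffleCoeff a b j = 0 :=
  if_neg h

lemma stuffleCoeff_zero_left (b j : ℕ) : stuffleCoeff 0 b j = if j = 0 then 1 else 0 := by
  cases j <;> simp [stuffleCoeff]

lemma stuffleCoeff_zero_right (a j : ℕ) : stuffleCoeff a 0 j = if j = 0 then 1 else 0 := by
  cases j <;> simp [stuffleCoeff]

lemma stuffleCoeff_succ_succ_succ (a b j : ℕ) :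
    stuffleCoeff (a + 1) (b + 1) (j + 1) = stuffleCoeff a b j := by
  simp only [stuffleCoeff, Nat.add_le_add_iff_right]
  rw [show a + 1 + (b + 1) - 2 * (j + 1) = a + b - 2 * j by omega,
    show b + 1 - (j + 1) = b - j by omega]

lemma stuffleCoeff_succ_succ {a b j : ℕ} (h : ¬(j = a + 1 ∧ j = b + 1)) :
    stuffleCoeff (a + 1) (b + 1) j = stuffleCoeff a (b + 1) j + stuffleCoeff (a + 1) b j := by
  unfold stuffleCoeff
  split_ifs with h₁ h₂ h₃ h₃
  · rw [show a + 1 + (b + 1) - 2 * j = a + b + 1 - 2 * j + 1 by omega,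
      show b + 1 - j = b - j + 1 by omega, Nat.choose_succ_succ', add_comm,
      show a + (b + 1) - 2 * j = a + b + 1 - 2 * j by omega,
      show a + 1 + b - 2 * j = a + b + 1 - 2 * j by omega]
  · rw [show b + 1 - j = 0 by omega]
    simp
  · rw [show a + 1 + (b + 1) - 2 * j = b + 1 - j by omega,
      show a + 1 + b - 2 * j = b - j by omega]
    simp
  all_goals omega

section Words

variable {R : Type*} [Semiring R] (G : List ℕ → R) (q : ℕ)

lemma strA_empty (L : ℕ) : strA q (∅ : Finset (Fin L)) = List.replicate L q := by
  simp [strA, List.ofFn_const]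

lemma strA_map_succ {L : ℕ} (S : Finset (Fin L)) :
    strA q (S.map (Fin.succEmb L)) = q :: strA q S := by
  simp [strA, List.ofFn_succ, Fin.succ_ne_zero]

lemma strA_insert_zero_map_succ {L : ℕ} (S : Finset (Fin L)) :
    strA q (insert 0 (S.map (Fin.succEmb L))) = 2 * q :: strA q S := by
  simp [strA, List.ofFn_succ, Fin.succ_ne_zero]

/-- The sum of `G` over `A_j^{L-j}`: the words of length `L` with `j` letters `2q`, the
others `q`. -/
def wordSum (L j : ℕ) : R :=
  ∑ S ∈ powersetCard j (univ : Finset (Fin L)), G (strA q S)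

lemma wordSum_zero (L : ℕ) : wordSum G q L 0 = G (List.replicate L q) := by
  simp [wordSum, strA_empty]

lemma wordSum_eq_zero_of_lt {L j : ℕ} (h : L < j) : wordSum G q L j = 0 := by
  rw [wordSum, powersetCard_eq_empty.2 (by simpa using h), sum_empty]

lemma wordSum_succ_succ (L j : ℕ) :
    wordSum G q (L + 1) (j + 1)
      = wordSum (fun w => G (q :: w)) q L (j + 1) + wordSum (fun w => G (2 * q :: w)) q L j := by
  have h0 : (0 : Fin (L + 1)) ∉ univ.map (Fin.succEmb L) := by simp [Fin.succ_ne_zero]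
  rw [wordSum, Fin.univ_succ, cons_eq_insert]
  change ∑ S ∈ powersetCard (j + 1) (insert 0 (univ.map (Fin.succEmb L))), G (strA q S) = _
  rw [powersetCard_succ_insert h0, sum_union, sum_image]
  · simp only [powersetCard_map, sum_map, RelEmbedding.coe_toEmbedding, mapEmbedding_apply,
      strA_map_succ, strA_insert_zero_map_succ]
    rfl
  · intro S hS T hT hST
    rw [mem_coe, mem_powersetCard] at hS hT
    rw [← erase_insert (fun h => h0 (hS.1 h)), hST, erase_insert (fun h => h0 (hT.1 h))]
  · refine disjoint_left.2 fun S hS hS' => ?_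
    obtain ⟨T, -, rfl⟩ := mem_image.1 hS'
    exact h0 ((mem_powersetCard.1 hS).1 (mem_insert_self 0 T))

/- Summing over an arbitrary range `j < N` beyond `min a b`, where the coefficients vanish, keeps
the induction free of boundary cases. -/
theorem stuffleSum_replicate_eq_sum_range :
    ∀ {a b N : ℕ}, min a b < N → ∀ G : List ℕ → R,
      stuffleSum G (List.replicate a q) (List.replicate b q)
        = ∑ j ∈ range N, (stuffleCoeff a b j : R) * wordSum G q (a + b - j) j
  | 0, b, N, hN, G => by
    rw [sum_eq_single_of_mem 0 (by simpa using hN) fun j _ hj => by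
      simp [stuffleCoeff_zero_left, hj]]
    simp [stuffleCoeff_zero_left, wordSum_zero]
  | a + 1, 0, N, hN, G => by
    rw [sum_eq_single_of_mem 0 (by simpa using hN) fun j _ hj => by
      simp [stuffleCoeff_zero_right, hj]]
    simp [stuffleCoeff_zero_right, wordSum_zero]
  | a + 1, b + 1, N + 1, hN, G => by
    have peel : ∑ j ∈ range (N + 1), (stuffleCoeff (a + 1) (b + 1) j : R)
          * wordSum G q (a + 1 + (b + 1) - j) j
        = ∑ j ∈ range (N + 1), (stuffleCoeff (a + 1) (b + 1) j : R)
            * wordSum (fun w => G (q :: w)) q (a + b + 1 - j) j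
          + ∑ j ∈ range N, (stuffleCoeff a b j : R)
            * wordSum (fun w => G (2 * q :: w)) q (a + b - j) j := by
      have shifted : ∑ j ∈ range N, (stuffleCoeff (a + 1) (b + 1) (j + 1) : R)
            * wordSum G q (a + 1 + (b + 1) - (j + 1)) (j + 1)
          = ∑ j ∈ range N, (stuffleCoeff (a + 1) (b + 1) (j + 1) : R)
              * wordSum (fun w => G (q :: w)) q (a + b + 1 - (j + 1)) (j + 1)
            + ∑ j ∈ range N, (stuffleCoeff a b j : R)
              * wordSum (fun w => G (2 * q :: w)) q (a + b - j) j := by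
        rw [← sum_add_distrib]
        refine sum_congr rfl fun j _ => ?_
        rw [stuffleCoeff_succ_succ_succ]
        by_cases hj : j ≤ a ∧ j ≤ b
        · rw [show a + 1 + (b + 1) - (j + 1) = a + b - j + 1 by omega, wordSum_succ_succ,
            show a + b + 1 - (j + 1) = a + b - j by omega, mul_add]
        · simp [stuffleCoeff_of_not_le hj]
      have initial : wordSum G q (a + 1 + (b + 1) - 0) 0
          = wordSum (fun w => G (q :: w)) q (a + b + 1 - 0) 0 := by
        rw [wordSum_zero, wordSum_zero, show a + 1 + (b + 1) - 0 = a + b + 1 - 0 + 1 by omega,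
          List.replicate_succ]
      rw [sum_range_succ', sum_range_succ' (fun j => (stuffleCoeff (a + 1) (b + 1) j : R)
        * wordSum (fun w => G (q :: w)) q (a + b + 1 - j) j), shifted, initial]
      exact add_right_comm _ _ _
    have pascal : ∑ j ∈ range (N + 1), (stuffleCoeff (a + 1) (b + 1) j : R)
            * wordSum (fun w => G (q :: w)) q (a + b + 1 - j) j
        = ∑ j ∈ range (N + 1), (stuffleCoeff a (b + 1) j : R)
            * wordSum (fun w => G (q :: w)) q (a + (b + 1) - j) j
          + ∑ j ∈ range (N + 1), (stuffleCoeff (a + 1) b j : R)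
            * wordSum (fun w => G (q :: w)) q (a + 1 + b - j) j := by
      rw [← sum_add_distrib]
      refine sum_congr rfl fun j _ => ?_
      by_cases hdeg : j = a + 1 ∧ j = b + 1
      · have vanish (L : ℕ) (hL : L < j) : wordSum (fun w => G (q :: w)) q L j = 0 :=
          wordSum_eq_zero_of_lt _ _ hL
        rw [vanish _ (by omega), vanish _ (by omega), vanish _ (by omega)]
        simp
      · rw [stuffleCoeff_succ_succ hdeg, Nat.cast_add, add_mul,
          show a + (b + 1) - j = a + b + 1 - j by omega,
          show a + 1 + b - j = a + b + 1 - j by omega]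
    rw [List.replicate_succ, List.replicate_succ, stuffleSum_cons_cons, ← List.replicate_succ,
      ← List.replicate_succ,
      stuffleSum_replicate_eq_sum_range (a := a) (b := b + 1) (N := N + 1) (by omega),
      stuffleSum_replicate_eq_sum_range (a := a + 1) (b := b) (N := N + 1) (by omega),
      stuffleSum_replicate_eq_sum_range (a := a) (b := b) (N := N) (by omega), peel, pascal,
      ← two_mul]

theorem stuffleSum_replicate (a b : ℕ) :
    stuffleSum G (List.replicate a q) (List.replicate b q)
      = ∑ j ∈ range (min a b + 1), ∑ S ∈ powersetCard j (univ : Finset (Fin (a + b - 2 * j + j))),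
          ((a + b - 2 * j).choose (b - j) : R) * G (strA q S) := by
  rw [stuffleSum_replicate_eq_sum_range q (lt_add_one _) G]
  refine sum_congr rfl fun j hj => ?_
  have hj' : j ≤ a ∧ j ≤ b := by simp only [mem_range] at hj; omega
  rw [stuffleCoeff, if_pos hj', wordSum, mul_sum, show a + b - j = a + b - 2 * j + j by omega]

theorem stuffleSum_replicate' (a b : ℕ) :
    stuffleSum G (List.replicate a q) (List.replicate b q)
      = ∑ j ∈ range (min a b + 1), ∑ S ∈ powersetCard j (univ : Finset (Fin (a + b - 2 * j + j))),
          ((a + b - 2 * j).choose (a - j) : R) * G (strA q S) := by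
  rw [stuffleSum_comm, stuffleSum_replicate, Nat.add_comm b a, min_comm b a]

lemma stuffleSum_replicate_cons (c : ℕ) (v : List ℕ) :
    ∀ (m : ℕ) (G : List ℕ → R), stuffleSum G (List.replicate m q) (c :: v)
      = stuffleSum (fun w => G (c :: w)) (List.replicate m q) v
        + ∑ i ∈ range m, (stuffleSum (fun w => G (List.replicate (i + 1) q ++ c :: w))
              (List.replicate (m - (i + 1)) q) v
            + stuffleSum (fun w => G (List.replicate i q ++ (q + c) :: w))
              (List.replicate (m - (i + 1)) q) v)
  | 0, G => by simp
  | m + 1, G => by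
    rw [List.replicate_succ, stuffleSum_cons_cons, ← List.replicate_succ,
      stuffleSum_replicate_cons c v m, sum_range_succ']
    simp only [Nat.add_sub_add_right, List.replicate_succ, List.cons_append, List.replicate_zero,
      List.nil_append, Nat.sub_zero]
    abel

theorem stuffleSum_replicate_cons_replicate (c m n : ℕ) :
    stuffleSum G (List.replicate m q) (c :: List.replicate n q)
      = stuffleSum (fun w => G (c :: w)) (List.replicate m q) (List.replicate n q)
        + ∑ i ∈ Icc 1 m, ∑ j ∈ range (min (m - i) n + 1),
          ∑ S ∈ powersetCard j (univ : Finset (Fin (m + n - i - 2 * j + j))),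
            ((m + n - i - 2 * j).choose (n - j) : R) *
              (G (List.replicate i q ++ c :: strA q S)
                + G (List.replicate (i - 1) q ++ (q + c) :: strA q S)) := by
  have reindex (f : ℕ → R) : ∑ i ∈ Icc 1 m, f i = ∑ i ∈ range m, f (i + 1) := by
    rw [range_eq_Ico, sum_Ico_add', zero_add, Ico_add_one_right_eq_Icc]
  rw [stuffleSum_replicate_cons, reindex]
  congr 1
  refine sum_congr rfl fun i hi => ?_
  rw [stuffleSum_replicate, stuffleSum_replicate, ← Nat.sub_add_comm (by simpa using hi),
    Nat.add_sub_cancel]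
  simp only [← sum_add_distrib, mul_add]

theorem stuffleSum_cons_replicate_cons_replicate (k l m n : ℕ) :
    stuffleSum G (k :: List.replicate m q) (l :: List.replicate n q) =
      (∑ i ∈ Icc 1 m, ∑ j ∈ range (min (m - i) n + 1),
        ∑ S ∈ powersetCard j (univ : Finset (Fin (m + n - i - 2 * j + j))),
          ((m + n - i - 2 * j).choose (n - j) : R) *
            (G (k :: (List.replicate i q ++ l :: strA q S))
              + G (k :: (List.replicate (i - 1) q ++ (q + l) :: strA q S))))
      + (∑ i ∈ Icc 1 n, ∑ j ∈ range (min m (n - i) + 1),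
        ∑ S ∈ powersetCard j (univ : Finset (Fin (m + n - i - 2 * j + j))),
          ((m + n - i - 2 * j).choose (m - j) : R) *
            (G (l :: (List.replicate i q ++ k :: strA q S))
              + G (l :: (List.replicate (i - 1) q ++ (q + k) :: strA q S))))
      + (∑ j ∈ range (min m n + 1),
        ∑ S ∈ powersetCard j (univ : Finset (Fin (m + n - 2 * j + j))),
          ((m + n - 2 * j).choose (m - j) : R) *
            (G (k :: l :: strA q S) + G (l :: k :: strA q S) + G ((k + l) :: strA q S))) := by
  rw [stuffleSum_cons_cons, stuffleSum_comm _ (k :: _), stuffleSum_replicate_cons_replicate,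
    stuffleSum_replicate_cons_replicate, stuffleSum_comm _ (List.replicate n q), add_add_add_comm,
    add_right_comm, ← stuffleSum_add, ← stuffleSum_add, stuffleSum_replicate', Nat.add_comm n m]
  simp only [min_comm (n - _) m]
  exact add_comm _ _

end Words

theorem mzv_stuffle_one_one (k l p : ℕ) (hk : 2 ≤ k) (hl : 2 ≤ l) (hp : 2 ≤ p) (m n : ℕ) :
    mzv (k :: List.replicate m p) * mzv (l :: List.replicate n p) =
      (∑ i ∈ Finset.Icc 1 m, ∑ j ∈ Finset.range (min (m - i) n + 1),
        ∑ S ∈ Finset.powersetCard j (Finset.univ : Finset (Fin (m + n - i - 2 * j + j))),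
          (Nat.choose (m + n - i - 2 * j) (n - j) : ℝ) *
            (mzv (k :: (List.replicate i p ++ l :: strA p S))
              + mzv (k :: (List.replicate (i - 1) p ++ (p + l) :: strA p S))))
      + (∑ i ∈ Finset.Icc 1 n, ∑ j ∈ Finset.range (min m (n - i) + 1),
        ∑ S ∈ Finset.powersetCard j (Finset.univ : Finset (Fin (m + n - i - 2 * j + j))),
          (Nat.choose (m + n - i - 2 * j) (m - j) : ℝ) *
            (mzv (l :: (List.replicate i p ++ k :: strA p S))
              + mzv (l :: (List.replicate (i - 1) p ++ (p + k) :: strA p S))))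
      + (∑ j ∈ Finset.range (min m n + 1),
        ∑ S ∈ Finset.powersetCard j (Finset.univ : Finset (Fin (m + n - 2 * j + j))),
          (Nat.choose (m + n - 2 * j) (m - j) : ℝ) *
            (mzv (k :: l :: strA p S) + mzv (l :: k :: strA p S)
              + mzv ((k + l) :: strA p S))) := by
  have admissible {c : ℕ} (hc : 2 ≤ c) (r : ℕ) : ∀ x ∈ c :: List.replicate r p, 2 ≤ x := by
    simp only [List.forall_mem_cons, List.mem_replicate]
    exact ⟨hc, fun x hx => hx.2 ▸ hp⟩
  rw [mzv_mul_mzv (admissible hk m) (admissible hl n)]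
  exact stuffleSum_cons_replicate_cons_replicate mzv p k l m n
end
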